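/- arXiv:1604.08606 — 4 statements merged into one kernel-verified Lean document; each statement's English description precedes it below -/
import Mathlib

section
/- Let μ be a finite Borel measure on [0,∞) and define φ(λ) = μ((0,λ]). If ∫_{(0,u₀]} |log t| dμ(t) < ∞ for some u₀ ∈ (0,1), then the function ε ↦ ε⁻¹ φ(ε^{1/4}) is integrable on (0, u₀⁴]. -/
open MeasureTheory Set Real
open scoped ENNReal

/-!
By Tonelli, `∫_{(0, u^p]} x⁻¹ μ((0, x^{1/p}]) dx = ∫_{t > 0} ∫_{[t^p, u^p]} x⁻¹ dx dμ(t)`,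
and the inner integral is `p log (u / t) ≤ p |log t|` for `0 < t ≤ u ≤ 1` and vanishes for `t > u`.
-/

theorem lintegral_ofReal_inv_Icc {a b : ℝ} (ha : 0 < a) (hab : a ≤ b) :
    ∫⁻ x in Icc a b, ENNReal.ofReal x⁻¹ = ENNReal.ofReal (log (b / a)) := by
  have hint : IntegrableOn (fun x : ℝ => x⁻¹) (Icc a b) :=
    (continuousOn_inv₀.mono fun x hx => (ha.trans_le hx.1).ne').integrableOn_Icc
  rw [← ofReal_integral_eq_lintegral_ofReal hint, integral_Icc_eq_integral_Ioc,
    ← intervalIntegral.integral_of_le hab, integral_inv_of_pos ha (ha.trans_le hab)]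
  filter_upwards [self_mem_ae_restrict measurableSet_Icc] with x hx
  exact inv_nonneg.mpr (ha.le.trans hx.1)

theorem lintegral_mul_measure_Ioc_eq {ν μ : Measure ℝ} [SFinite ν] [SFinite μ]
    {w : ℝ → ℝ≥0∞} {f : ℝ → ℝ} (hw : Measurable w) (hf : Measurable f) :
    ∫⁻ x, w x * μ (Ioc 0 (f x)) ∂ν = ∫⁻ t in Ioi 0, ∫⁻ x in {x | t ≤ f x}, w x ∂ν ∂μ := by
  set S : Set (ℝ × ℝ) := {p | 0 < p.2 ∧ p.2 ≤ f p.1}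
  have hS : MeasurableSet S :=
    (measurableSet_lt measurable_const measurable_snd).inter
      (measurableSet_le measurable_snd (hf.comp measurable_fst))
  have hswap := lintegral_lintegral_swap (μ := ν) (ν := μ)
    (f := fun x t => S.indicator (fun p => w p.1) (x, t))
    ((hw.comp measurable_fst).indicator hS).aemeasurable
  convert hswap using 1
  · refine lintegral_congr fun x => ?_
    rw [← lintegral_indicator_const measurableSet_Ioc]
    rfl
  · rw [← lintegral_indicator measurableSet_Ioi]
    refine lintegral_congr fun t => ?_
    by_cases ht : 0 < t
    · rw [indicator_of_mem (mem_Ioi.mpr ht),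
        ← lintegral_indicator (measurableSet_le measurable_const hf)]
      congr 1 with x
      simp [S, indicator, ht]
    · rw [indicator_of_notMem (mt mem_Ioi.mp ht)]
      simp [S, indicator, ht]

theorem setLIntegral_ofReal_inv_le_indicator_log {u p t : ℝ} (hu : 0 ≤ u) (hu1 : u ≤ 1)
    (hp : 0 < p) (ht : 0 < t) :
    ∫⁻ x in {x | t ≤ x ^ p⁻¹}, ENNReal.ofReal x⁻¹ ∂(volume.restrict (Ioc 0 (u ^ p))) ≤
      (Ioc 0 u).indicator (fun t => ENNReal.ofReal (p * |log t|)) t := by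
  have hsub : {x | t ≤ x ^ p⁻¹} ∩ Ioc 0 (u ^ p) ⊆ Icc (t ^ p) (u ^ p) := fun x hx =>
    ⟨(le_rpow_inv_iff_of_pos ht.le hx.2.1.le hp).mp hx.1, hx.2.2⟩
  have hf : Measurable fun x : ℝ => x ^ p⁻¹ := measurable_id.pow_const _
  rw [Measure.restrict_restrict (measurableSet_le measurable_const hf)]
  refine (lintegral_mono_set hsub).trans ?_
  by_cases htu : t ≤ u
  · have htp : 0 < t ^ p := rpow_pos_of_pos ht p
    rw [lintegral_ofReal_inv_Icc htp (rpow_le_rpow ht.le htu hp.le),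
      indicator_of_mem (show t ∈ Ioc 0 u from ⟨ht, htu⟩)]
    refine ENNReal.ofReal_le_ofReal ?_
    rw [log_div (rpow_pos_of_pos (ht.trans_le htu) p).ne' htp.ne', log_rpow (ht.trans_le htu),
      log_rpow ht]
    have hlog_u : p * log u ≤ 0 := mul_nonpos_of_nonneg_of_nonpos hp.le (log_nonpos hu hu1)
    have hlog_t : p * -log t ≤ p * |log t| := mul_le_mul_of_nonneg_left (neg_le_abs _) hp.le
    linarith
  · rw [Icc_eq_empty (not_le.mpr (rpow_lt_rpow hu (not_le.mp htu) hp)),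
      Measure.restrict_empty, lintegral_zero_measure]
    exact zero_le

theorem integrableOn_inv_mul_measure_Ioc_rpow_inv {μ : Measure ℝ} [SFinite μ] {u p : ℝ}
    (hu : 0 ≤ u) (hu1 : u ≤ 1) (hp : 0 < p)
    (hlog : IntegrableOn (fun t => |log t|) (Ioc 0 u) μ) :
    IntegrableOn (fun x => x⁻¹ * (μ (Ioc 0 (x ^ p⁻¹))).toReal) (Ioc 0 (u ^ p)) := by
  have hφ : Measurable fun s : ℝ => μ (Ioc 0 s) :=
    Monotone.measurable fun a b hab => measure_mono (Ioc_subset_Ioc_right hab)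
  have hf : Measurable fun x : ℝ => x ^ p⁻¹ := measurable_id.pow_const _
  refine ⟨(measurable_inv.mul (hφ.comp hf).ennreal_toReal).aestronglyMeasurable, ?_⟩
  calc ∫⁻ x in Ioc 0 (u ^ p), ‖x⁻¹ * (μ (Ioc 0 (x ^ p⁻¹))).toReal‖ₑ
      ≤ ∫⁻ x in Ioc 0 (u ^ p), ENNReal.ofReal x⁻¹ * μ (Ioc 0 (x ^ p⁻¹)) := by
        refine setLIntegral_mono' measurableSet_Ioc fun x hx => ?_
        rw [enorm_mul, Real.enorm_of_nonneg (inv_nonneg.mpr hx.1.le),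
          Real.enorm_of_nonneg ENNReal.toReal_nonneg]
        exact mul_le_mul_right ENNReal.ofReal_toReal_le _
    _ = ∫⁻ t in Ioi 0, ∫⁻ x in {x | t ≤ x ^ p⁻¹}, ENNReal.ofReal x⁻¹
          ∂(volume.restrict (Ioc 0 (u ^ p))) ∂μ :=
        lintegral_mul_measure_Ioc_eq measurable_inv.ennreal_ofReal hf
    _ ≤ ∫⁻ t in Ioi 0, (Ioc 0 u).indicator (fun t => ENNReal.ofReal (p * |log t|)) t ∂μ :=
        setLIntegral_mono' measurableSet_Ioi fun t ht =>
          setLIntegral_ofReal_inv_le_indicator_log hu hu1 hp ht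
    _ ≤ ∫⁻ t in Ioc 0 u, ENNReal.ofReal (p * |log t|) ∂μ :=
        (setLIntegral_le_lintegral _ _).trans_eq (lintegral_indicator measurableSet_Ioc _)
    _ < ⊤ := IntegrableOn.setLIntegral_lt_top (hlog.const_mul p)

theorem stmt0_general (μ : Measure ℝ) [IsFiniteMeasure μ]
    (u₀ : ℝ) (hu₀ : u₀ ∈ Ioo (0 : ℝ) 1)
    (hlog : IntegrableOn (fun t => |Real.log t|) (Ioc 0 u₀) μ) :
    IntegrableOn (fun ε => ε⁻¹ * (μ (Ioc 0 (ε ^ ((1 : ℝ) / 4)))).toReal)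
      (Ioc 0 (u₀ ^ 4)) volume := by
  have h := integrableOn_inv_mul_measure_Ioc_rpow_inv hu₀.1.le hu₀.2.le four_pos hlog
  rwa [rpow_ofNat, ← one_div] at h

/-- If μ is a finite Borel measure supported on [0,∞), φ(λ)=μ((0,λ]), and
∫_{(0,u₀]} |log t| dμ(t) < ∞ for some u₀ ∈ (0,1), then ε ↦ ε⁻¹ φ(ε^{1/4}) is
integrable on (0, u₀⁴]. -/
theorem stmt0 (μ : Measure ℝ) [IsFiniteMeasure μ] (hsupp : μ (Iio 0) = 0)
    (u₀ : ℝ) (hu₀ : u₀ ∈ Ioo (0 : ℝ) 1)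
    (hlog : IntegrableOn (fun t => |Real.log t|) (Ioc 0 u₀) μ) :
    IntegrableOn (fun ε => ε⁻¹ * (μ (Ioc 0 (ε ^ ((1 : ℝ) / 4)))).toReal)
      (Ioc 0 (u₀ ^ 4)) volume :=
  stmt0_general μ u₀ hu₀ hlog
end

section
/- Let μ be a finite Borel measure on [0,∞), φ(u) = μ((0,u]), and 0 < u₀ < 1. Then ∫_{(0,u₀]} u⁻¹ φ(u) du ≤ ∫_{(0,u₀]} |log t| dμ(t) + φ(u₀)|log u₀| + limsup_{δ→0⁺} |log δ| φ(δ), whenever the right-hand side is finite. -/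
/-!
By Tonelli, `∫_{(0,u₀]} φ(u)/u du = ∫_{(0,u₀]} log (u₀/t) dμ(t)`, and `log (u₀/t) ≤ |log t|`
because `u₀ ≤ 1`; the boundary terms on the right-hand side are nonnegative, so they can be dropped.
-/

open MeasureTheory Set Filter
open scoped ENNReal

theorem lintegral_measure_Ioc_mul_eq_lintegral_lintegral_Icc {μ ν : Measure ℝ} [SFinite μ]
    [SFinite ν] {f : ℝ → ℝ≥0∞} (hf : Measurable f) (a b : ℝ) :
    ∫⁻ u in Ioc a b, μ (Ioc a u) * f u ∂ν = ∫⁻ t in Ioc a b, ∫⁻ u in Icc t b, f u ∂ν ∂μ := by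
  set S : Set (ℝ × ℝ) := {p | a < p.2 ∧ p.2 ≤ p.1 ∧ p.1 ≤ b}
  have hS : MeasurableSet S :=
    (measurableSet_lt measurable_const measurable_snd).inter
      ((measurableSet_le measurable_snd measurable_fst).inter
        (measurableSet_le measurable_fst measurable_const))
  have h_fst : ∀ u, (Ioc a b).indicator (fun u => μ (Ioc a u) * f u) u
      = ∫⁻ t, S.indicator (fun p => f p.1) (u, t) ∂μ := by
    intro u
    by_cases hu : u ∈ Ioc a b
    · rw [indicator_of_mem hu, mul_comm, ← setLIntegral_const,
        ← lintegral_indicator measurableSet_Ioc]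
      congr 1 with t
      simp only [S, indicator, mem_Ioc, mem_ofPred_eq] at hu ⊢
      grind
    · rw [indicator_of_notMem hu, eq_comm, ← lintegral_zero]
      congr 1 with t
      simp only [S, indicator, mem_Ioc, mem_ofPred_eq] at hu ⊢
      grind
  have h_snd : ∀ t, (Ioc a b).indicator (fun t => ∫⁻ u in Icc t b, f u ∂ν) t
      = ∫⁻ u, S.indicator (fun p => f p.1) (u, t) ∂ν := by
    intro t
    by_cases ht : t ∈ Ioc a b
    · rw [indicator_of_mem ht, ← lintegral_indicator measurableSet_Icc]
      congr 1 with u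
      simp only [S, indicator, mem_Ioc, mem_Icc, mem_ofPred_eq] at ht ⊢
      grind
    · rw [indicator_of_notMem ht, eq_comm, ← lintegral_zero]
      congr 1 with u
      simp only [S, indicator, mem_Ioc, mem_ofPred_eq] at ht ⊢
      grind
  rw [← lintegral_indicator measurableSet_Ioc, ← lintegral_indicator measurableSet_Ioc]
  simp only [h_fst, h_snd]
  exact lintegral_lintegral_swap ((hf.comp measurable_fst).indicator hS).aemeasurable

theorem lintegral_Icc_inv_eq_ofReal_log {t b : ℝ} (ht : 0 < t) (htb : t ≤ b) :
    ∫⁻ u in Icc t b, (ENNReal.ofReal u)⁻¹ = ENNReal.ofReal (Real.log (b / t)) := by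
  have hint : IntegrableOn (fun u : ℝ => u⁻¹) (Ioc t b) :=
    ((continuousOn_id.inv₀ fun u hu => (ht.trans_le hu.1).ne').integrableOn_Icc).mono_set
      Ioc_subset_Icc_self
  rw [← integral_inv_of_pos ht (ht.trans_le htb), intervalIntegral.integral_of_le htb,
    ofReal_integral_eq_lintegral_ofReal hint, ← setLIntegral_congr Ioc_ae_eq_Icc]
  · exact setLIntegral_congr_fun measurableSet_Ioc fun u hu =>
      (ENNReal.ofReal_inv_of_pos (ht.trans hu.1)).symm
  · exact (ae_restrict_iff' measurableSet_Ioc).mpr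
      (ae_of_all _ fun u hu => inv_nonneg.2 (ht.trans hu.1).le)

theorem lintegral_measure_Ioc_div_eq_lintegral_log (μ : Measure ℝ) [SFinite μ] (b : ℝ) :
    ∫⁻ u in Ioc 0 b, μ (Ioc 0 u) / ENNReal.ofReal u
      = ∫⁻ t in Ioc 0 b, ENNReal.ofReal (Real.log (b / t)) ∂μ := by
  simp only [ENNReal.div_eq_inv_mul, mul_comm _ (μ _)]
  rw [lintegral_measure_Ioc_mul_eq_lintegral_lintegral_Icc
    (f := fun u => (ENNReal.ofReal u)⁻¹) ENNReal.measurable_ofReal.inv]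
  exact setLIntegral_congr_fun measurableSet_Ioc fun t ht =>
    lintegral_Icc_inv_eq_ofReal_log ht.1 ht.2

theorem Real.log_div_le_abs_log {b t : ℝ} (hb : 0 < b) (hb1 : b ≤ 1) (ht : 0 < t) :
    Real.log (b / t) ≤ |Real.log t| := by
  rw [Real.log_div hb.ne' ht.ne']
  linarith [Real.log_nonpos hb.le hb1, neg_le_abs (Real.log t)]

theorem stmt2_general (μ : Measure ℝ) [IsFiniteMeasure μ]
    (u₀ : ℝ) (hu₀ : u₀ ∈ Ioo (0 : ℝ) 1) :
    (∫⁻ u in Ioc 0 u₀, μ (Ioc 0 u) / ENNReal.ofReal u)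
      ≤ (∫⁻ t in Ioc 0 u₀, ENNReal.ofReal |Real.log t| ∂μ)
        + μ (Ioc 0 u₀) * ENNReal.ofReal |Real.log u₀|
        + Filter.limsup (fun δ : ℝ => ENNReal.ofReal |Real.log δ| * μ (Ioc 0 δ))
            (nhdsWithin 0 (Ioi 0)) := by
  refine le_add_right (le_add_right ?_)
  rw [lintegral_measure_Ioc_div_eq_lintegral_log]
  exact setLIntegral_mono' measurableSet_Ioc fun t ht =>
    ENNReal.ofReal_le_ofReal (Real.log_div_le_abs_log hu₀.1 hu₀.2.le ht.1)

/-- For a finite Borel measure μ supported on [0,∞), φ(u) = μ((0,u]) and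
0 < u₀ < 1, one has
∫_{(0,u₀]} u⁻¹ φ(u) du ≤ ∫_{(0,u₀]} |log t| dμ(t) + φ(u₀)|log u₀| + limsup_{δ→0⁺} |log δ| φ(δ),
whenever the right-hand side is finite. -/
theorem stmt2 (μ : Measure ℝ) [IsFiniteMeasure μ] (hsupp : μ (Iio 0) = 0)
    (u₀ : ℝ) (hu₀ : u₀ ∈ Ioo (0 : ℝ) 1)
    (hfin : (∫⁻ t in Ioc 0 u₀, ENNReal.ofReal |Real.log t| ∂μ)
        + μ (Ioc 0 u₀) * ENNReal.ofReal |Real.log u₀|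
        + Filter.limsup (fun δ : ℝ => ENNReal.ofReal |Real.log δ| * μ (Ioc 0 δ))
            (nhdsWithin 0 (Ioi 0)) ≠ ⊤) :
    (∫⁻ u in Ioc 0 u₀, μ (Ioc 0 u) / ENNReal.ofReal u)
      ≤ (∫⁻ t in Ioc 0 u₀, ENNReal.ofReal |Real.log t| ∂μ)
        + μ (Ioc 0 u₀) * ENNReal.ofReal |Real.log u₀|
        + Filter.limsup (fun δ : ℝ => ENNReal.ofReal |Real.log δ| * μ (Ioc 0 δ))
            (nhdsWithin 0 (Ioi 0)) :=
  stmt2_general μ u₀ hu₀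
end

section
/- Let H be a Hilbert space, Q a bounded positive operator on H, ξ, S, ζ ∈ H vectors, and λ > 0. Suppose Q ξ = c · Q S + ζ for a scalar c > 0, with ‖ζ‖ ≤ M and ‖P_λ S‖ ≤ N where P_λ = χ_{[λ,∞)}(Q). Then ‖ξ‖² ≥ c² ‖P_λ S‖² − 2 c λ⁻¹ M N. -/
/-!
Writing `R = f(Q)` for `f x = x⁻¹` on `[λ, ∞)` and `0` elsewhere, one has `R Q = P_λ` and
`‖R‖ ≤ λ⁻¹`. Applying `R` to `Q ξ = c Q S + ζ` gives `P_λ ξ = c P_λ S + R ζ`, so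
`‖ξ‖ ≥ ‖P_λ ξ‖ ≥ c ‖P_λ S‖ - λ⁻¹ M`, and squaring this (when the right side is nonnegative)
yields the bound.
-/

noncomputable def truncatedInv (l : ℝ) (x : ℝ) : ℂ :=
  if l ≤ x then (x : ℂ)⁻¹ else 0

theorem truncatedInv_mul_ofReal {l : ℝ} (hl : 0 < l) :
    truncatedInv l * (fun x : ℝ => (x : ℂ)) = fun x => if l ≤ x then 1 else 0 := by
  funext x
  by_cases hx : l ≤ x
  · have hx0 : (x : ℂ) ≠ 0 := Complex.ofReal_ne_zero.mpr (hl.trans_le hx).ne'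
    simp [truncatedInv, hx, hx0]
  · simp [truncatedInv, hx]

theorem norm_truncatedInv_le {l : ℝ} (hl : 0 < l) (x : ℝ) : ‖truncatedInv l x‖ ≤ l⁻¹ := by
  by_cases hx : l ≤ x
  · rw [truncatedInv, if_pos hx, norm_inv, Complex.norm_real, Real.norm_of_nonneg (hl.trans_le hx).le]
    exact inv_anti₀ hl hx
  · simpa [truncatedInv, hx] using hl.le

theorem norm_ite_one_zero_le (p : Prop) [Decidable p] : ‖(if p then 1 else 0 : ℂ)‖ ≤ 1 := by
  split_ifs <;> simp

section

variable {𝕜 E : Type*} [NontriviallyNormedField 𝕜] [SeminormedAddCommGroup E] [NormedSpace 𝕜 E]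

theorem norm_smul_sub_norm_le_of_mul_eq {P Q R : E →L[𝕜] E} (hRQ : R * Q = P) (hP : ‖P‖ ≤ 1)
    {ξ S ζ : E} {c : 𝕜} (heq : Q ξ = c • Q S + ζ) : ‖c‖ * ‖P S‖ - ‖R ζ‖ ≤ ‖ξ‖ := by
  have hPξ : P ξ = c • P S + R ζ := by
    rw [← hRQ, mul_apply_eq_comp, mul_apply_eq_comp, heq, map_add, map_smul]
  calc ‖c‖ * ‖P S‖ - ‖R ζ‖ = ‖c • P S‖ - ‖-R ζ‖ := by rw [norm_smul, norm_neg]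
    _ ≤ ‖P ξ‖ := by simpa [hPξ] using norm_sub_norm_le (c • P S) (-R ζ)
    _ ≤ ‖ξ‖ := P.le_of_opNorm_le_of_le hP le_rfl |>.trans_eq (one_mul _)

end

theorem sq_sub_two_mul_le_sq_of_sub_le {x y b : ℝ} (hy : 0 ≤ y) (h : y - b ≤ x) :
    y ^ 2 - 2 * y * b ≤ x ^ 2 := by
  rcases le_total b y with hby | hyb
  · nlinarith [pow_le_pow_left₀ (sub_nonneg.mpr hby) h 2, sq_nonneg b]
  · nlinarith [sq_nonneg x]

theorem stmt6_general {H : Type*} [NormedAddCommGroup H] [InnerProductSpace ℂ H]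
    [CompleteSpace H] (Q : H →L[ℂ] H)
    (Φ : (ℝ → ℂ) →⋆ₐ[ℂ] (H →L[ℂ] H))
    (hΦid : Φ (fun x : ℝ => (x : ℂ)) = Q)
    (hΦnorm : ∀ (f : ℝ → ℂ) (c : ℝ), (∀ x : ℝ, (x : ℂ) ∈ spectrum ℂ Q → ‖f x‖ ≤ c) →
      ‖Φ f‖ ≤ c)
    (l : ℝ) (hl : 0 < l)
    (P : H →L[ℂ] H) (hP : P = Φ (fun x : ℝ => if l ≤ x then (1 : ℂ) else 0))
    (ξ S ζ : H) (c M N : ℝ) (hc : 0 < c)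
    (heq : Q ξ = c • Q S + ζ) (hζ : ‖ζ‖ ≤ M) (hPS : ‖P S‖ ≤ N) :
    ‖ξ‖ ^ 2 ≥ c ^ 2 * ‖P S‖ ^ 2 - 2 * c * l⁻¹ * M * N := by
  set R := Φ (truncatedInv l)
  have hRQ : R * Q = P := by rw [hP, ← hΦid, ← map_mul, truncatedInv_mul_ofReal hl]
  have hPnorm : ‖P‖ ≤ 1 := hP ▸ hΦnorm _ 1 fun x _ => norm_ite_one_zero_le _
  have hRζ : ‖R ζ‖ ≤ l⁻¹ * M :=
    R.le_of_opNorm_le_of_le (hΦnorm _ _ fun x _ => norm_truncatedInv_le hl x) hζ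
  have hsub : c * ‖P S‖ - ‖R ζ‖ ≤ ‖ξ‖ := by
    rw [RCLike.real_smul_eq_coe_smul (K := ℂ)] at heq
    simpa [abs_of_pos hc] using norm_smul_sub_norm_le_of_mul_eq hRQ hPnorm heq
  have hprod : c * ‖P S‖ * ‖R ζ‖ ≤ c * N * (l⁻¹ * M) := by
    have hN : 0 ≤ N := (norm_nonneg _).trans hPS
    gcongr
  calc c ^ 2 * ‖P S‖ ^ 2 - 2 * c * l⁻¹ * M * N
      ≤ (c * ‖P S‖) ^ 2 - 2 * (c * ‖P S‖) * ‖R ζ‖ := by linarith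
    _ ≤ ‖ξ‖ ^ 2 := sq_sub_two_mul_le_sq_of_sub_le (by positivity) hsub

/-- Let Q be a bounded positive operator on a Hilbert space H (with Borel
functional calculus encoded by Φ as in the truncated-inverse construction), ξ, S, ζ ∈ H,
λ > 0, and suppose Q ξ = c • Q S + ζ with c > 0, ‖ζ‖ ≤ M and ‖P_λ S‖ ≤ N where
P_λ = χ_{[λ,∞)}(Q).  Then ‖ξ‖² ≥ c² ‖P_λ S‖² − 2 c λ⁻¹ M N. -/
theorem stmt6 {H : Type*} [NormedAddCommGroup H] [InnerProductSpace ℂ H]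
    [CompleteSpace H] (Q : H →L[ℂ] H)
    (hQsa : IsSelfAdjoint Q) (hQpos : ∀ x : H, 0 ≤ (inner ℂ (Q x) x : ℂ).re)
    (Φ : (ℝ → ℂ) →⋆ₐ[ℂ] (H →L[ℂ] H))
    (hΦid : Φ (fun x : ℝ => (x : ℂ)) = Q)
    (hΦnorm : ∀ (f : ℝ → ℂ) (c : ℝ), (∀ x : ℝ, (x : ℂ) ∈ spectrum ℂ Q → ‖f x‖ ≤ c) →
      ‖Φ f‖ ≤ c)
    (l : ℝ) (hl : 0 < l)
    (P : H →L[ℂ] H) (hP : P = Φ (fun x : ℝ => if l ≤ x then (1 : ℂ) else 0))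
    (ξ S ζ : H) (c M N : ℝ) (hc : 0 < c)
    (heq : Q ξ = c • Q S + ζ) (hζ : ‖ζ‖ ≤ M) (hPS : ‖P S‖ ≤ N) :
    ‖ξ‖ ^ 2 ≥ c ^ 2 * ‖P S‖ ^ 2 - 2 * c * l⁻¹ * M * N :=
  stmt6_general Q Φ hΦid hΦnorm l hl P hP ξ S ζ c M N hc heq hζ hPS
end

section
/- Let A be a complex *-algebra generated by elements X₁,…,X_n, V a bimodule over A, and F₁,…,F_k noncommutative polynomials with F_i(X) = 0 in A and with A ≅ ℂ⟨t₁,…,t_n⟩ / (ideal generated by the F_i). Then the map δ ↦ (δ(X₁),…,δ(X_n)) is a linear isomorphism from the space of derivations Der(A, V) onto {(Q₁,…,Q_n) ∈ Vⁿ : Σ_j ∂_j F_i(X) # Q_j = 0 for all i}, provided each F_i acts as zero on both sides of V. -/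
open TensorProduct MulOpposite

/-- The action (a⊗b)#v = a·v·b of A ⊗ A on an A-bimodule V, extended linearly. -/
noncomputable def bimodAct {A V : Type*} [Ring A] [Algebra ℂ A]
    [AddCommGroup V] [Module ℂ V] [Module A V] [Module Aᵐᵒᵖ V]
    [IsScalarTower ℂ A V] [IsScalarTower ℂ Aᵐᵒᵖ V] [SMulCommClass ℂ A V]
    (v : V) : A ⊗[ℂ] A →ₗ[ℂ] V :=
  TensorProduct.lift (LinearMap.mk₂ ℂ (fun a b => a • (op b • v))
    (fun a a' b => by simp [add_smul])
    (fun c a b => by simp [smul_assoc])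
    (fun a b b' => by simp [op_add, add_smul, smul_add])
    (fun c a b => by
      try dsimp only
      rw [op_smul, smul_assoc, smul_comm]))

/-! The map `a ↦ Σ_j ∂_j a(X) # Q_j` is a derivation of `ℂ⟨t⟩` into `V` along `π` taking `t_j`
to `Q_j`, and so is `δ ∘ π` for every derivation `δ` of `A` with `δ(X_j) = Q_j`; derivations of a
free algebra are determined by their values on the generators, so the two agree. Since
`F_i(X) = 0`, a derivation along `π` that kills the `F_i` kills the whole ideal `ker π` they
generate, hence descends to `A`. -/

theorem LinearMap.exists_comp_eq_of_ker_le {R M N P : Type*} [Ring R]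
    [AddCommGroup M] [AddCommGroup N] [AddCommGroup P] [Module R M] [Module R N] [Module R P]
    {f : M →ₗ[R] N} (hf : Function.Surjective f) {g : M →ₗ[R] P} (h : ker f ≤ ker g) :
    ∃ ψ : N →ₗ[R] P, ψ ∘ₗ f = g :=
  ⟨(ker f).liftQ g h ∘ₗ (f.quotKerEquivOfSurjective hf).symm.toLinearMap, by
    ext x
    rw [LinearMap.comp_apply, LinearMap.comp_apply, LinearEquiv.coe_coe,
      (f.quotKerEquivOfSurjective hf).symm_apply_eq.2
        (f.quotKerEquivOfSurjective_apply_mk hf x).symm, Submodule.liftQ_apply]⟩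

section DerivationAlong

variable {A B V : Type*} [Ring A] [Algebra ℂ A] [Ring B] [Algebra ℂ B]
    [AddCommGroup V] [Module ℂ V] [Module A V] [Module Aᵐᵒᵖ V]

def IsDerivationAlong (f : B →ₐ[ℂ] A) (φ : B →ₗ[ℂ] V) : Prop :=
  ∀ a b, φ (a * b) = f a • φ b + op (f b) • φ a

namespace IsDerivationAlong

variable {f : B →ₐ[ℂ] A} {φ : B →ₗ[ℂ] V}

theorem map_one_eq_zero (hφ : IsDerivationAlong f φ) : φ 1 = 0 := by
  have h := hφ (1 : B) 1
  rw [mul_one, map_one f, one_smul, op_one, one_smul] at h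
  exact right_eq_add.mp h

theorem map_algebraMap (hφ : IsDerivationAlong f φ) (r : ℂ) : φ (algebraMap ℂ B r) = 0 := by
  rw [Algebra.algebraMap_eq_smul_one, map_smul, hφ.map_one_eq_zero, smul_zero]

theorem comp {δ : A →ₗ[ℂ] V} (hδ : IsDerivationAlong (AlgHom.id ℂ A) δ) (g : B →ₐ[ℂ] A) :
    IsDerivationAlong g (δ ∘ₗ g.toLinearMap) := fun a b => by
  simpa using hδ (g a) (g b)

theorem of_comp {g : B →ₐ[ℂ] A} (hg : Function.Surjective g) {δ : A →ₗ[ℂ] V}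
    (hδ : IsDerivationAlong g (δ ∘ₗ g.toLinearMap)) : IsDerivationAlong (AlgHom.id ℂ A) δ := by
  intro a b
  obtain ⟨x, rfl⟩ := hg a
  obtain ⟨y, rfl⟩ := hg b
  simpa using hδ x y

theorem eq_zero_of_mem_closure {κ : Type*} (hφ : IsDerivationAlong f φ) {F : κ → B}
    (hfF : ∀ i, f (F i) = 0) (hφF : ∀ i, φ (F i) = 0) {x : B}
    (hx : x ∈ AddSubgroup.closure {x | ∃ a b i, x = a * F i * b}) : φ x = 0 := by
  induction hx using AddSubgroup.closure_induction with
  | mem x hx =>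
    obtain ⟨a, b, i, rfl⟩ := hx
    simp [hφ (a * F i) b, hφ a (F i), hfF, hφF]
  | zero => exact map_zero φ
  | add x y _ _ hx hy => rw [map_add, hx, hy, add_zero]
  | neg x _ hx => rw [map_neg, hx, neg_zero]

theorem freeAlgebra_ext {ι : Type*} {f : FreeAlgebra ℂ ι →ₐ[ℂ] A}
    {φ ψ : FreeAlgebra ℂ ι →ₗ[ℂ] V} (hφ : IsDerivationAlong f φ) (hψ : IsDerivationAlong f ψ)
    (h : ∀ i, φ (FreeAlgebra.ι ℂ i) = ψ (FreeAlgebra.ι ℂ i)) : φ = ψ := by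
  ext x
  induction x using FreeAlgebra.induction with
  | grade0 r => rw [hφ.map_algebraMap, hψ.map_algebraMap]
  | grade1 i => exact h i
  | mul a b ha hb => rw [hφ, hψ, ha, hb]
  | add a b ha hb => rw [map_add, map_add, ha, hb]

end IsDerivationAlong

end DerivationAlong

section FreeDeriv

variable {A V : Type*} [Ring A] [Algebra ℂ A]
    [AddCommGroup V] [Module ℂ V] [Module A V] [Module Aᵐᵒᵖ V]
    [IsScalarTower ℂ A V] [IsScalarTower ℂ Aᵐᵒᵖ V] [SMulCommClass ℂ A V]

theorem bimodAct_tmul (v : V) (a b : A) : bimodAct v (a ⊗ₜ[ℂ] b) = a • op b • v := rfl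

theorem bimodAct_mul_one_tmul [SMulCommClass A Aᵐᵒᵖ V] (v : V) (x : A ⊗[ℂ] A) (b : A) :
    bimodAct v (x * (1 ⊗ₜ[ℂ] b)) = op b • bimodAct v x := by
  induction x using TensorProduct.induction_on with
  | zero => simp
  | tmul p q =>
    rw [Algebra.TensorProduct.tmul_mul_tmul, mul_one, bimodAct_tmul, bimodAct_tmul, op_mul,
      mul_smul, smul_comm]
  | add x y hx hy => rw [add_mul, map_add, hx, hy, map_add, smul_add]

theorem bimodAct_tmul_one_mul (v : V) (x : A ⊗[ℂ] A) (a : A) :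
    bimodAct v ((a ⊗ₜ[ℂ] 1) * x) = a • bimodAct v x := by
  induction x using TensorProduct.induction_on with
  | zero => simp
  | tmul p q =>
    rw [Algebra.TensorProduct.tmul_mul_tmul, one_mul, bimodAct_tmul, bimodAct_tmul, mul_smul]
  | add x y hx hy => rw [mul_add, map_add, hx, hy, map_add, smul_add]

variable {ι : Type*} [Fintype ι] (π : FreeAlgebra ℂ ι →ₐ[ℂ] A)
    (D : ι → (FreeAlgebra ℂ ι →ₗ[ℂ] FreeAlgebra ℂ ι ⊗[ℂ] FreeAlgebra ℂ ι))

/-- `a ↦ Σ_j ∂_j a(X) # Q_j`, where `D j` plays the role of `∂_j`. -/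
noncomputable def freeDeriv (Q : ι → V) : FreeAlgebra ℂ ι →ₗ[ℂ] V :=
  ∑ j, bimodAct (Q j) ∘ₗ (Algebra.TensorProduct.map π π).toLinearMap ∘ₗ D j

theorem freeDeriv_apply (Q : ι → V) (a : FreeAlgebra ℂ ι) :
    freeDeriv π D Q a = ∑ j, bimodAct (Q j) (Algebra.TensorProduct.map π π (D j a)) := by
  simp only [freeDeriv, LinearMap.sum_apply, LinearMap.comp_apply, AlgHom.toLinearMap_apply]

theorem freeDeriv_ι [DecidableEq ι]
    (hgen : ∀ j i, D j (FreeAlgebra.ι ℂ i) = if i = j then 1 ⊗ₜ[ℂ] 1 else 0)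
    (Q : ι → V) (i : ι) : freeDeriv π D Q (FreeAlgebra.ι ℂ i) = Q i := by
  simp [freeDeriv_apply, hgen, apply_ite, bimodAct_tmul]

theorem isDerivationAlong_freeDeriv [SMulCommClass A Aᵐᵒᵖ V]
    (hLeibD : ∀ j a b, D j (a * b) = D j a * (1 ⊗ₜ[ℂ] b) + (a ⊗ₜ[ℂ] 1) * D j b)
    (Q : ι → V) : IsDerivationAlong π (freeDeriv π D Q) := by
  intro a b
  simp only [freeDeriv_apply, hLeibD, map_add, map_mul, Algebra.TensorProduct.map_tmul, map_one,
    bimodAct_mul_one_tmul, bimodAct_tmul_one_mul, Finset.sum_add_distrib, Finset.smul_sum]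
  rw [add_comm]

end FreeDeriv

/-- Let A be a complex algebra generated by X₁,…,X_n, presented as the
quotient of ℂ⟨t₁,…,t_n⟩ by the two-sided ideal generated by F₁,…,F_k (via the
surjection π, t_j ↦ X_j), with F_i(X) = 0 in A, and let V be an A-bimodule on which
each F_i(X) acts as zero on both sides.  Then δ ↦ (δ(X₁),…,δ(X_n)) is a linear
bijection from the derivations Der(A,V) onto
{(Q₁,…,Q_n) ∈ Vⁿ : Σ_j ∂_jF_i(X) # Q_j = 0 for all i}. -/
theorem stmt16 {n k : ℕ} {A V : Type*} [Ring A] [Algebra ℂ A]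
    [AddCommGroup V] [Module ℂ V] [Module A V] [Module Aᵐᵒᵖ V]
    [SMulCommClass A Aᵐᵒᵖ V] [IsScalarTower ℂ A V] [IsScalarTower ℂ Aᵐᵒᵖ V]
    [SMulCommClass ℂ A V]
    (X : Fin n → A) (π : FreeAlgebra ℂ (Fin n) →ₐ[ℂ] A)
    (hπsurj : Function.Surjective π) (hπι : ∀ j, π (FreeAlgebra.ι ℂ j) = X j)
    (F : Fin k → FreeAlgebra ℂ (Fin n)) (hFX : ∀ i, π (F i) = 0)
    (hker : ∀ a : FreeAlgebra ℂ (Fin n), π a = 0 ↔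
      a ∈ AddSubgroup.closure
        {x : FreeAlgebra ℂ (Fin n) | ∃ a' b' i, x = a' * F i * b'})
    (D : Fin n →
      (FreeAlgebra ℂ (Fin n) →ₗ[ℂ] FreeAlgebra ℂ (Fin n) ⊗[ℂ] FreeAlgebra ℂ (Fin n)))
    (hLeibD : ∀ (j : Fin n) (a b : FreeAlgebra ℂ (Fin n)),
      D j (a * b) = D j a * (1 ⊗ₜ[ℂ] b) + (a ⊗ₜ[ℂ] 1) * D j b)
    (hgen : ∀ j i : Fin n,
      D j (FreeAlgebra.ι ℂ i)
        = if i = j then (1 : FreeAlgebra ℂ (Fin n)) ⊗ₜ[ℂ] 1 else 0) :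
    (∀ δ : A →ₗ[ℂ] V, (∀ a b : A, δ (a * b) = a • δ b + op b • δ a) →
      ∀ i : Fin k,
        ∑ j : Fin n, bimodAct (δ (X j)) ((Algebra.TensorProduct.map π π) (D j (F i)))
          = 0) ∧
    (∀ Q : Fin n → V,
      (∀ i : Fin k,
        ∑ j : Fin n, bimodAct (Q j) ((Algebra.TensorProduct.map π π) (D j (F i))) = 0) →
      ∃! δ : A →ₗ[ℂ] V,
        (∀ a b : A, δ (a * b) = a • δ b + op b • δ a) ∧ ∀ j, δ (X j) = Q j) := by
  have hΦ := isDerivationAlong_freeDeriv (V := V) π D hLeibD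
  have hΦι := freeDeriv_ι (V := V) π D hgen
  have hδΦ : ∀ (δ : A →ₗ[ℂ] V) Q, IsDerivationAlong (AlgHom.id ℂ A) δ →
      (∀ j, δ (X j) = Q j) → δ ∘ₗ π.toLinearMap = freeDeriv π D Q := fun δ Q hδ hδQ =>
    (hδ.comp π).freeAlgebra_ext (hΦ Q) fun j => by simp [hπι, hδQ, hΦι]
  refine ⟨fun δ hδ i => ?_, fun Q hQ => ?_⟩
  · rw [← freeDeriv_apply, ← hδΦ δ _ hδ fun _ => rfl]
    simp [hFX]
  have hΦker : LinearMap.ker π.toLinearMap ≤ LinearMap.ker (freeDeriv π D Q) := fun a ha =>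
    (hΦ Q).eq_zero_of_mem_closure hFX (fun i => (freeDeriv_apply π D Q _).trans (hQ i))
      ((hker a).1 ha)
  obtain ⟨δ, hδ⟩ := LinearMap.exists_comp_eq_of_ker_le hπsurj hΦker
  refine ⟨δ, ⟨IsDerivationAlong.of_comp hπsurj (hδ ▸ hΦ Q), fun j => ?_⟩, ?_⟩
  · rw [← hπι, ← hΦι Q j, ← hδ]
    rfl
  rintro δ' ⟨hδ', hδ'Q⟩
  exact (LinearMap.cancel_right hπsurj).1 ((hδΦ δ' Q hδ' hδ'Q).trans hδ.symm)
end
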